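/- arXiv:2402.15859 — 5 statements merged into one kernel-verified Lean document; each statement's English description precedes it below -/
import Mathlib

section
/- If a 4-dimensional spacetime of quasi-constant sectional curvature satisfies Einstein's field equations R_{hk} − (R/2)g_{hk} = κ² T_{hk} with perfect-fluid energy-momentum tensor T_{hk} = (σ + p)A_hA_k + p g_{hk}, then the pressure and energy density are p = (−3γ + 2μ)/κ² and σ = 3γ/κ². -/
open Finset BigOperators

/-- If a (QC)_4-spacetime satisfies Einstein's field equations
`R_{hk} - (R/2) g_{hk} = κ² T_{hk}` with perfect-fluid energy-momentum tensor
`T_{hk} = (σ + p) A_h A_k + p g_{hk}` (fluid velocity identified with the generator `A`),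
then `p = (-3γ + 2μ)/κ²` and `σ = 3γ/κ²`. -/
theorem qc4_efe_pressure_density (g ginv : Fin 4 → Fin 4 → ℝ) (A : Fin 4 → ℝ)
    (γ μ κ p σ : ℝ) (Ric T : Fin 4 → Fin 4 → ℝ) (Scal : ℝ)
    (hκ : κ ≠ 0)
    (hgsymm : ∀ i j, g i j = g j i)
    (hginvsymm : ∀ i j, ginv i j = ginv j i)
    (hinv : ∀ i j, ∑ k, ginv i k * g k j = if i = j then (1 : ℝ) else 0)
    (hA : ∑ i, (∑ j, ginv i j * A j) * A i = -1)
    (hRic : ∀ h k, Ric h k = (3 * γ - μ) * g h k + 2 * μ * A h * A k)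
    (hScal : Scal = ∑ h, ∑ k, ginv h k * Ric h k)
    (hT : ∀ h k, T h k = (σ + p) * A h * A k + p * g h k)
    (hEFE : ∀ h k, Ric h k - (Scal / 2) * g h k = κ ^ 2 * T h k) :
    p = (-3 * γ + 2 * μ) / κ ^ 2 ∧ σ = 3 * γ / κ ^ 2 := by
  have hκ2 : κ ^ 2 ≠ 0 := pow_ne_zero _ hκ
  -- splitting lemma for double sums
  have split : ∀ (w : Fin 4 → Fin 4 → ℝ) (a b : ℝ),
      ∑ h, ∑ k, w h k * (a * g h k + b * (A h * A k))
      = a * (∑ h, ∑ k, w h k * g h k) + b * (∑ h, ∑ k, w h k * (A h * A k)) := by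
    intro w a b
    rw [Finset.mul_sum, Finset.mul_sum, ← Finset.sum_add_distrib]
    refine Finset.sum_congr rfl fun h _ => ?_
    rw [Finset.mul_sum, Finset.mul_sum, ← Finset.sum_add_distrib]
    exact Finset.sum_congr rfl fun k _ => by ring
  -- S1 : trace of g with ginv is 4
  have S1 : ∑ h, ∑ k, ginv h k * g h k = 4 := by
    have h1 : ∀ h : Fin 4, ∑ k, ginv h k * g h k = 1 := by
      intro h
      have h2 : ∑ k, ginv h k * g k h = 1 := by simpa using hinv h h
      rw [← h2]
      exact Finset.sum_congr rfl fun k _ => by rw [hgsymm]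
    rw [Finset.sum_congr rfl fun h _ => h1 h]
    simp
  -- S2 : contraction of A⊗A with ginv is -1
  have S2 : ∑ h, ∑ k, ginv h k * (A h * A k) = -1 := by
    calc ∑ h, ∑ k, ginv h k * (A h * A k)
        = ∑ h, (∑ k, ginv h k * A k) * A h := by
          refine Finset.sum_congr rfl fun h _ => ?_
          rw [Finset.sum_mul]
          exact Finset.sum_congr rfl fun k _ => by ring
      _ = -1 := hA
  -- B_k g^{kh} = A^h style identity
  have hBg : ∀ h, ∑ k, (∑ j, ginv k j * A j) * g h k = A h := by
    intro h
    calc ∑ k, (∑ j, ginv k j * A j) * g h k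
        = ∑ k, ∑ j, ginv j k * g k h * A j := by
          refine Finset.sum_congr rfl fun k _ => ?_
          rw [Finset.sum_mul]
          refine Finset.sum_congr rfl fun j _ => ?_
          rw [hginvsymm j k, hgsymm k h]; ring
      _ = ∑ j, (∑ k, ginv j k * g k h) * A j := by
          rw [Finset.sum_comm]
          exact Finset.sum_congr rfl fun j _ => by rw [Finset.sum_mul]
      _ = ∑ j, (if j = h then (1:ℝ) else 0) * A j := by
          exact Finset.sum_congr rfl fun j _ => by rw [hinv]
      _ = A h := by simp
  -- S3 : contraction of g with B⊗B is -1
  have S3 : ∑ h, ∑ k, ((∑ j, ginv h j * A j) * (∑ j, ginv k j * A j)) * g h k = -1 := by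
    calc ∑ h, ∑ k, ((∑ j, ginv h j * A j) * (∑ j, ginv k j * A j)) * g h k
        = ∑ h, (∑ j, ginv h j * A j) * ∑ k, (∑ j, ginv k j * A j) * g h k := by
          refine Finset.sum_congr rfl fun h _ => ?_
          rw [Finset.mul_sum]
          exact Finset.sum_congr rfl fun k _ => by ring
      _ = ∑ h, (∑ j, ginv h j * A j) * A h := by
          exact Finset.sum_congr rfl fun h _ => by rw [hBg]
      _ = -1 := hA
  -- S4 : contraction of A⊗A with B⊗B is 1
  have S4 : ∑ h, ∑ k, ((∑ j, ginv h j * A j) * (∑ j, ginv k j * A j)) * (A h * A k) = 1 := by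
    calc ∑ h, ∑ k, ((∑ j, ginv h j * A j) * (∑ j, ginv k j * A j)) * (A h * A k)
        = ∑ h, ∑ k, ((∑ j, ginv h j * A j) * A h) * ((∑ j, ginv k j * A j) * A k) := by
          exact Finset.sum_congr rfl fun h _ => Finset.sum_congr rfl fun k _ => by ring
      _ = (∑ h, (∑ j, ginv h j * A j) * A h) * (∑ k, (∑ j, ginv k j * A j) * A k) :=
          (Finset.sum_mul_sum _ _ _ _).symm
      _ = 1 := by rw [hA]; norm_num
  -- scalar curvature value
  have hScal2 : Scal = 12 * γ - 6 * μ := by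
    rw [hScal]
    calc ∑ h, ∑ k, ginv h k * Ric h k
        = ∑ h, ∑ k, ginv h k * ((3*γ-μ) * g h k + (2*μ) * (A h * A k)) := by
          refine Finset.sum_congr rfl fun h _ => Finset.sum_congr rfl fun k _ => ?_
          rw [hRic]; ring
      _ = (3*γ-μ) * (∑ h, ∑ k, ginv h k * g h k)
          + (2*μ) * (∑ h, ∑ k, ginv h k * (A h * A k)) := split ginv _ _
      _ = 12 * γ - 6 * μ := by rw [S1, S2]; ring
  -- general contraction of EFE with a weight
  have hc : ∀ w : Fin 4 → Fin 4 → ℝ,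
      ((3*γ-μ) - Scal/2) * (∑ h, ∑ k, w h k * g h k)
        + (2*μ) * (∑ h, ∑ k, w h k * (A h * A k))
      = (κ^2*p) * (∑ h, ∑ k, w h k * g h k)
        + (κ^2*(σ+p)) * (∑ h, ∑ k, w h k * (A h * A k)) := by
    intro w
    calc ((3*γ-μ) - Scal/2) * (∑ h, ∑ k, w h k * g h k)
          + (2*μ) * (∑ h, ∑ k, w h k * (A h * A k))
        = ∑ h, ∑ k, w h k * (((3*γ-μ) - Scal/2) * g h k + (2*μ) * (A h * A k)) :=
          (split w _ _).symm
      _ = ∑ h, ∑ k, w h k * ((κ^2*p) * g h k + (κ^2*(σ+p)) * (A h * A k)) := by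
          refine Finset.sum_congr rfl fun h _ => Finset.sum_congr rfl fun k _ => ?_
          have he := hEFE h k
          rw [hRic, hT] at he
          linear_combination (w h k) * he
      _ = (κ^2*p) * (∑ h, ∑ k, w h k * g h k)
          + (κ^2*(σ+p)) * (∑ h, ∑ k, w h k * (A h * A k)) := split w _ _
  have e1 := hc ginv
  rw [S1, S2, hScal2] at e1
  have e2 := hc (fun h k => (∑ j, ginv h j * A j) * (∑ j, ginv k j * A j))
  rw [S3, S4, hScal2] at e2
  constructor
  · rw [eq_div_iff hκ2]; linear_combination (-1/3) * e1 + (-1/3) * e2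
  · rw [eq_div_iff hκ2]; linear_combination -e2
end

section
/- If a (QC)_4-spacetime is Ricci semi-symmetric (∇_l∇_m R_{ij} − ∇_m∇_l R_{ij} = 0) and μ ≠ 0, then A_p R^p_{hlm} = 0, and consequently μ = γ. -/
open Finset BigOperators

/-- If a (QC)_4-spacetime is Ricci semi-symmetric
(`∇_l∇_m R_{ij} - ∇_m∇_l R_{ij} = 0`) and `μ ≠ 0`, then `A_p R^p_{hlm} = 0`, and
consequently `μ = γ`. Second covariant derivatives are modelled as component data `ddA`,
`ddRic` related by the Leibniz rule and the Ricci identity. -/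
theorem qc4_ricci_semisymmetric (g ginv : Fin 4 → Fin 4 → ℝ) (A : Fin 4 → ℝ) (γ μ : ℝ)
    (Rm : Fin 4 → Fin 4 → Fin 4 → Fin 4 → ℝ) (Ric : Fin 4 → Fin 4 → ℝ)
    (ddA : Fin 4 → Fin 4 → Fin 4 → ℝ) (ddRic : Fin 4 → Fin 4 → Fin 4 → Fin 4 → ℝ)
    (hgsymm : ∀ i j, g i j = g j i)
    (hginvsymm : ∀ i j, ginv i j = ginv j i)
    (hinv : ∀ i j, ∑ k, ginv i k * g k j = if i = j then (1 : ℝ) else 0)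
    (hA : ∑ i, (∑ j, ginv i j * A j) * A i = -1)
    (hRm : ∀ h i j k, Rm h i j k =
      γ * (g h k * g i j - g h j * g i k)
      + μ * (g h k * A i * A j + g i j * A h * A k - g h j * A i * A k - g i k * A h * A j))
    (hRic : ∀ h k, Ric h k = (3 * γ - μ) * g h k + 2 * μ * A h * A k)
    -- commutator of second covariant derivatives of the Ricci tensor, from ∇g = 0 and
    -- commuting second derivatives of scalars
    (hddRic : ∀ l m i j, ddRic l m i j - ddRic m l i j =
      2 * μ * ((ddA l m i - ddA m l i) * A j + A i * (ddA l m j - ddA m l j)))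
    -- Ricci identity: ∇_l∇_m A_h - ∇_m∇_l A_h = A_p R^p_{hlm}
    (hRicciId : ∀ l m h, ddA l m h - ddA m l h =
      ∑ q, (∑ r, ginv q r * A r) * Rm q h l m)
    -- Ricci semi-symmetry
    (hsemi : ∀ l m i j, ddRic l m i j - ddRic m l i j = 0)
    (hμ : μ ≠ 0) :
    (∀ h l m, ∑ q, (∑ r, ginv q r * A r) * Rm q h l m = 0) ∧ μ = γ := by
  set B : Fin 4 → ℝ := fun q => ∑ r, ginv q r * A r with hB
  have L1 : ∀ m, ∑ q, B q * g q m = A m := by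
    intro m
    calc ∑ q, B q * g q m = ∑ q, ∑ r, A r * (ginv r q * g q m) := by
          refine Finset.sum_congr rfl fun q _ => ?_
          rw [hB]
          simp only
          rw [Finset.sum_mul]
          exact Finset.sum_congr rfl fun r _ => by rw [hginvsymm]; ring
      _ = ∑ r, ∑ q, A r * (ginv r q * g q m) := Finset.sum_comm
      _ = ∑ r, A r * ∑ q, ginv r q * g q m := by
          exact Finset.sum_congr rfl fun r _ => (Finset.mul_sum _ _ _).symm
      _ = ∑ r, A r * (if r = m then 1 else 0) := by
          exact Finset.sum_congr rfl fun r _ => by rw [hinv]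
      _ = A m := by simp
  have L2 : ∑ q, B q * A q = -1 := hA
  have key : ∀ h l m, (∑ q, B q * Rm q h l m) = (γ - μ) * (g h l * A m - g h m * A l) := by
    intro h l m
    calc ∑ q, B q * Rm q h l m
        = ∑ q, ((B q * g q m) * (γ * g h l + μ * (A h * A l))
            + (B q * g q l) * (-(γ * g h m) - μ * (A h * A m))
            + (B q * A q) * (μ * (g h l * A m - g h m * A l))) := by
          refine Finset.sum_congr rfl fun q _ => ?_
          rw [hRm]; ring
      _ = (∑ q, B q * g q m) * (γ * g h l + μ * (A h * A l))
            + (∑ q, B q * g q l) * (-(γ * g h m) - μ * (A h * A m))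
            + (∑ q, B q * A q) * (μ * (g h l * A m - g h m * A l)) := by
          rw [Finset.sum_add_distrib, Finset.sum_add_distrib, ← Finset.sum_mul,
            ← Finset.sum_mul, ← Finset.sum_mul]
      _ = (γ - μ) * (g h l * A m - g h m * A l) := by
          rw [L1, L1, L2]; ring
  have hF : ∀ l m i j,
      (γ - μ) * (g i l * A m - g i m * A l) * A j
        + A i * ((γ - μ) * (g j l * A m - g j m * A l)) = 0 := by
    intro l m i j
    have h1 := hddRic l m i j
    rw [hsemi] at h1
    have hX : (ddA l m i - ddA m l i) * A j + A i * (ddA l m j - ddA m l j) = 0 := by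
      rcases mul_eq_zero.mp h1.symm with h | h
      · exact (hμ (by linarith)).elim
      · exact h
    rw [hRicciId l m i, hRicciId l m j] at hX
    rw [show (∑ q, (∑ r, ginv q r * A r) * Rm q i l m) = ∑ q, B q * Rm q i l m from rfl,
      show (∑ q, (∑ r, ginv q r * A r) * Rm q j l m) = ∑ q, B q * Rm q j l m from rfl,
      key, key] at hX
    exact hX
  have H1 : ∀ j l m, (γ - μ) * (g j l * A m - g j m * A l) = 0 := by
    intro j l m
    have hz : ∑ i, B i * ((γ - μ) * (g i l * A m - g i m * A l) * A j
        + A i * ((γ - μ) * (g j l * A m - g j m * A l))) = 0 :=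
      Finset.sum_eq_zero fun i _ => by rw [hF l m i j, mul_zero]
    have hc : ∑ i, B i * ((γ - μ) * (g i l * A m - g i m * A l) * A j
        + A i * ((γ - μ) * (g j l * A m - g j m * A l)))
        = (∑ i, B i * g i l) * ((γ - μ) * A m * A j)
          + (∑ i, B i * g i m) * (-((γ - μ) * A l * A j))
          + (∑ i, B i * A i) * ((γ - μ) * (g j l * A m - g j m * A l)) := by
      rw [show ∑ i, B i * ((γ - μ) * (g i l * A m - g i m * A l) * A j
            + A i * ((γ - μ) * (g j l * A m - g j m * A l)))
          = ∑ i, ((B i * g i l) * ((γ - μ) * A m * A j)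
            + (B i * g i m) * (-((γ - μ) * A l * A j))
            + (B i * A i) * ((γ - μ) * (g j l * A m - g j m * A l)))
          from Finset.sum_congr rfl fun i _ => by ring]
      rw [Finset.sum_add_distrib, Finset.sum_add_distrib, ← Finset.sum_mul,
        ← Finset.sum_mul, ← Finset.sum_mul]
    rw [hc, L1, L1, L2] at hz
    nlinarith [hz]
  refine ⟨fun h l m => (key h l m).trans (H1 h l m), ?_⟩
  have H2 : ∀ j m, (γ - μ) * (A j * A m + g j m) = 0 := by
    intro j m
    have hz : ∑ l, B l * ((γ - μ) * (g j l * A m - g j m * A l)) = 0 :=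
      Finset.sum_eq_zero fun l _ => by rw [H1 j l m, mul_zero]
    have hc : ∑ l, B l * ((γ - μ) * (g j l * A m - g j m * A l))
        = (∑ l, B l * g l j) * ((γ - μ) * A m)
          + (∑ l, B l * A l) * (-((γ - μ) * g j m)) := by
      rw [show ∑ l, B l * ((γ - μ) * (g j l * A m - g j m * A l))
          = ∑ l, ((B l * g l j) * ((γ - μ) * A m) + (B l * A l) * (-((γ - μ) * g j m)))
          from Finset.sum_congr rfl fun l _ => by rw [hgsymm j l]; ring]
      rw [Finset.sum_add_distrib, ← Finset.sum_mul, ← Finset.sum_mul]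
    rw [hc, L1, L2] at hz
    nlinarith [hz]
  have e1 : ∀ j, ∑ m, ginv j m * g j m = 1 := by
    intro j
    calc ∑ m, ginv j m * g j m = ∑ m, ginv j m * g m j :=
          Finset.sum_congr rfl fun m _ => by rw [hgsymm]
      _ = 1 := by simpa using hinv j j
  have inner : ∀ j, ∑ m, ginv j m * ((γ - μ) * (A j * A m + g j m))
      = (γ - μ) * (B j * A j) + (γ - μ) := by
    intro j
    calc ∑ m, ginv j m * ((γ - μ) * (A j * A m + g j m))
        = ∑ m, ((ginv j m * A m) * ((γ - μ) * A j) + (ginv j m * g j m) * (γ - μ)) :=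
          Finset.sum_congr rfl fun m _ => by ring
      _ = (∑ m, ginv j m * A m) * ((γ - μ) * A j) + (∑ m, ginv j m * g j m) * (γ - μ) := by
          rw [Finset.sum_add_distrib, ← Finset.sum_mul, ← Finset.sum_mul]
      _ = (γ - μ) * (B j * A j) + (γ - μ) := by rw [e1, hB]; ring
  have hz : ∑ j, ((γ - μ) * (B j * A j) + (γ - μ)) = 0 := by
    rw [← Finset.sum_congr rfl fun j _ => inner j]
    exact Finset.sum_eq_zero fun j _ => Finset.sum_eq_zero fun m _ => by
      rw [H2 j m, mul_zero]
  have hc : ∑ j, ((γ - μ) * (B j * A j) + (γ - μ))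
      = (γ - μ) * (∑ j, B j * A j) + 4 * (γ - μ) := by
    rw [Finset.sum_add_distrib, ← Finset.mul_sum]
    simp [Finset.sum_const]
    try ring
  rw [hc, L2] at hz
  linarith
end

section
/- In a (QC)_4-spacetime with μ ≠ 0 and μ = γ, if the Ricci tensor is parallel (∇_l R_{ij} = 0) and μ is non-vanishing, then ∇_l A_j = 0, i.e., the generator A is parallel (hence a Killing and irrotational vector field). -/
open Finset BigOperators

/-- In a (QC)_4-spacetime with `μ ≠ 0` and `μ = γ` (so
`R_{ij} = 2μ(g_{ij} + A_i A_j)`), if the Ricci tensor is parallel (`∇_l R_{ij} = 0`),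
then `∇_l A_j = 0`, i.e. the generator `A` is parallel (hence Killing and irrotational). -/
theorem qc4_ricci_symmetric_static (g ginv : Fin 4 → Fin 4 → ℝ) (A : Fin 4 → ℝ) (γ μ : ℝ)
    (Ric : Fin 4 → Fin 4 → ℝ) (dμ : Fin 4 → ℝ)
    (dA : Fin 4 → Fin 4 → ℝ) (dRic : Fin 4 → Fin 4 → Fin 4 → ℝ)
    (hgsymm : ∀ i j, g i j = g j i)
    (hginvsymm : ∀ i j, ginv i j = ginv j i)
    (hinv : ∀ i j, ∑ k, ginv i k * g k j = if i = j then (1 : ℝ) else 0)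
    (hA : ∑ i, (∑ j, ginv i j * A j) * A i = -1)
    -- A is a unit vector field: A^i ∇_l A_i = 0
    (hAunitderiv : ∀ l, ∑ i, (∑ k, ginv i k * A k) * dA l i = 0)
    (hμγ : μ = γ)
    (hRic : ∀ i j, Ric i j = 2 * μ * (g i j + A i * A j))
    -- Leibniz rule: ∇_l R_{ij} = 2 μ_l (g_{ij} + A_i A_j) + 2μ(∇_l A_i A_j + A_i ∇_l A_j)
    (hdRic : ∀ l i j, dRic l i j =
      2 * dμ l * (g i j + A i * A j) + 2 * μ * (dA l i * A j + A i * dA l j))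
    -- Ricci tensor is parallel
    (hpar : ∀ l i j, dRic l i j = 0)
    (hμ : μ ≠ 0) :
    ∀ l j, dA l j = 0 := by
  intro l j
  have hAg : ∑ i, (∑ k, ginv i k * A k) * g i j = A j := by
    have h1 : ∑ i, (∑ k, ginv i k * A k) * g i j
        = ∑ k, A k * ∑ i, ginv i k * g i j := by
      simp only [Finset.sum_mul]
      rw [Finset.sum_comm]
      exact Finset.sum_congr rfl fun k _ => by
        rw [Finset.mul_sum]; exact Finset.sum_congr rfl fun i _ => by ring
    have h2 : ∀ k : Fin 4, ∑ i, ginv i k * g i j = if k = j then (1:ℝ) else 0 := by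
      intro k
      rw [← hinv k j]
      exact Finset.sum_congr rfl fun i _ => by rw [hginvsymm]
    rw [h1]
    simp [h2]
  have key : ∑ i, (∑ k, ginv i k * A k) * dRic l i j = 0 := by simp [hpar]
  have expand : ∑ i, (∑ k, ginv i k * A k) * dRic l i j =
      2 * dμ l * ((∑ i, (∑ k, ginv i k * A k) * g i j)
        + (∑ i, (∑ k, ginv i k * A k) * A i) * A j)
      + 2 * μ * ((∑ i, (∑ k, ginv i k * A k) * dA l i) * A j
        + (∑ i, (∑ k, ginv i k * A k) * A i) * dA l j) := by
    simp only [hdRic, Finset.mul_sum, Finset.sum_mul, ← Finset.sum_add_distrib]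
    exact Finset.sum_congr rfl fun i _ => Finset.sum_congr rfl fun x _ => by ring
  rw [expand, hAg, hA, hAunitderiv l] at key
  have hmd : μ * dA l j = 0 := by nlinarith [key]
  rcases mul_eq_zero.mp hmd with h | h
  · exact absurd h hμ
  · exact h
end

section
/- Every Ricci simple conformally flat 4-dimensional spacetime (R_{ij} = −R A_iA_j with A unit timelike) is a spacetime of quasi-constant sectional curvature, with γ = −R/6 and μ = −R/2 in the decomposition R_{hijk} = γ(g_{hk}g_{ij}−g_{hj}g_{ik}) + μ(g_{hk}A_iA_j + g_{ij}A_hA_k − g_{hj}A_iA_k − g_{ik}A_hA_j). -/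
open Finset BigOperators

/-- Every Ricci simple conformally flat 4-dimensional spacetime
(`R_{ij} = -R A_i A_j` with `A` unit timelike) is a spacetime of quasi-constant sectional
curvature with `γ = -R/6` and `μ = -R/2`. -/
theorem ricci_simple_is_qc4 (g ginv : Fin 4 → Fin 4 → ℝ) (A : Fin 4 → ℝ)
    (Rm : Fin 4 → Fin 4 → Fin 4 → Fin 4 → ℝ) (Ric : Fin 4 → Fin 4 → ℝ) (Scal : ℝ)
    (hgsymm : ∀ i j, g i j = g j i)
    (hginvsymm : ∀ i j, ginv i j = ginv j i)
    (hinv : ∀ i j, ∑ k, ginv i k * g k j = if i = j then (1 : ℝ) else 0)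
    (hA : ∑ i, (∑ j, ginv i j * A j) * A i = -1)
    -- conformal flatness: the curvature tensor is determined by the Ricci tensor
    (hCF : ∀ h i j k, Rm h i j k =
      (1 / 2) * (g h k * Ric i j - g h j * Ric i k + g i j * Ric h k - g i k * Ric h j)
      - (Scal / 6) * (g h k * g i j - g h j * g i k))
    -- Ricci simple
    (hRS : ∀ i j, Ric i j = -Scal * A i * A j) :
    ∀ h i j k, Rm h i j k =
      (-Scal / 6) * (g h k * g i j - g h j * g i k)
      + (-Scal / 2) * (g h k * A i * A j + g i j * A h * A k
        - g h j * A i * A k - g i k * A h * A j) := by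
  intro h i j k
  rw [hCF, hRS, hRS, hRS, hRS]
  ring
end

section
/- For constant scalar curvature R, in a (QC)_4-spacetime solution of F(R)-gravity, the pressure and energy density satisfy p = (3γ−μ)F_R(R)/κ² − F(R)/(2κ²) and σ = 3(μ−γ)F_R(R)/κ² + F(R)/(2κ²). -/
open Finset BigOperators

/-- For constant scalar curvature `R`, in a (QC)_4-spacetime solution of
F(R)-gravity, the pressure and energy density satisfy
`p = (3γ-μ)F_R(R)/κ² - F(R)/(2κ²)` and `σ = 3(μ-γ)F_R(R)/κ² + F(R)/(2κ²)`. -/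
theorem fr_qc4_pressure_density (g ginv : Fin 4 → Fin 4 → ℝ) (A : Fin 4 → ℝ)
    (γ μ κ p σ Scal FR' : ℝ) (F : ℝ → ℝ) (Ric T : Fin 4 → Fin 4 → ℝ)
    (hκ : κ ≠ 0)
    (hgsymm : ∀ i j, g i j = g j i)
    (hginvsymm : ∀ i j, ginv i j = ginv j i)
    (hinv : ∀ i j, ∑ k, ginv i k * g k j = if i = j then (1 : ℝ) else 0)
    (hA : ∑ i, (∑ j, ginv i j * A j) * A i = -1)
    (hF' : HasDerivAt F FR' Scal) (hF'ne : FR' ≠ 0)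
    -- (QC)_4 Ricci tensor and scalar curvature
    (hRic : ∀ i j, Ric i j = (3 * γ - μ) * g i j + 2 * μ * A i * A j)
    (hScal : Scal = 6 * (2 * γ - μ))
    (hT : ∀ i j, T i j = (σ + p) * A i * A j + p * g i j)
    (hFE : ∀ i j, Ric i j - (Scal / 2) * g i j =
      (κ ^ 2 / FR') * T i j + ((F Scal - Scal * FR') / (2 * FR')) * g i j) :
    p = (3 * γ - μ) * FR' / κ ^ 2 - F Scal / (2 * κ ^ 2) ∧
    σ = 3 * (μ - γ) * FR' / κ ^ 2 + F Scal / (2 * κ ^ 2) := by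
  set Ah : Fin 4 → ℝ := fun i => ∑ j, ginv i j * A j with hAh
  set c : ℝ := (F Scal - Scal * FR') / (2 * FR') with hc
  -- g lowers Ah back to A
  have hlow : ∀ i, ∑ j, g i j * Ah j = A i := by
    intro i
    have : ∑ j, g i j * Ah j = ∑ k, (∑ j, ginv k j * g j i) * A k := by
      simp only [hAh, Finset.mul_sum]
      rw [Finset.sum_comm]
      apply Finset.sum_congr rfl; intro k _
      rw [Finset.sum_mul]
      apply Finset.sum_congr rfl; intro j _
      rw [hgsymm i j, hginvsymm k j]; ring
    rw [this]
    have : ∀ k, (∑ j, ginv k j * g j i) * A k = (if k = i then (1:ℝ) else 0) * A k := by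
      intro k; rw [hinv k i]
    simp_rw [this]
    simp
  -- S_g for Ah: ∑∑ Ah i * Ah j * g i j = -1
  have SgA : ∑ i, ∑ j, Ah i * Ah j * g i j = -1 := by
    have : ∀ i, ∑ j, Ah i * Ah j * g i j = Ah i * A i := by
      intro i
      rw [show Ah i * A i = Ah i * ∑ j, g i j * Ah j by rw [hlow]]
      rw [Finset.mul_sum]
      apply Finset.sum_congr rfl; intro j _; ring
    simp_rw [this]
    exact hA
  -- S_AA for Ah: ∑∑ Ah i * Ah j * (A i * A j) = 1
  have SAA : ∑ i, ∑ j, Ah i * Ah j * (A i * A j) = 1 := by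
    have : ∑ i, ∑ j, Ah i * Ah j * (A i * A j)
        = (∑ i, Ah i * A i) * (∑ j, Ah j * A j) := by
      rw [Finset.sum_mul_sum]
      apply Finset.sum_congr rfl; intro i _
      apply Finset.sum_congr rfl; intro j _; ring
    rw [this, hA]; ring
  -- trace of g: ∑∑ ginv i j * g i j = 4
  have Sg : ∑ i, ∑ j, ginv i j * g i j = 4 := by
    have : ∀ i : Fin 4, ∑ j, ginv i j * g i j = 1 := by
      intro i
      have h := hinv i i
      simp only [eq_self_iff_true, if_true] at h
      rw [← h]
      apply Finset.sum_congr rfl; intro j _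
      rw [hgsymm i j]
    simp_rw [this]
    simp
  -- ∑∑ ginv i j * (A i * A j) = -1
  have SgAA : ∑ i, ∑ j, ginv i j * (A i * A j) = -1 := by
    rw [← hA]
    apply Finset.sum_congr rfl; intro i _
    rw [Finset.sum_mul]
    apply Finset.sum_congr rfl; intro j _; ring
  -- contraction of the field equation with Ah ⊗ Ah
  have EA : (3 * γ - μ) * (-1) + 2 * μ * 1 - Scal / 2 * (-1)
      = κ ^ 2 / FR' * ((σ + p) * 1 + p * (-1)) + c * (-1) := by
    have key : ∑ i, ∑ j, Ah i * Ah j * (Ric i j - Scal / 2 * g i j)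
        = ∑ i, ∑ j, Ah i * Ah j * ((κ ^ 2 / FR') * T i j + c * g i j) := by
      apply Finset.sum_congr rfl; intro i _
      apply Finset.sum_congr rfl; intro j _
      rw [hFE i j]
    have lhs : ∑ i, ∑ j, Ah i * Ah j * (Ric i j - Scal / 2 * g i j)
        = (3 * γ - μ) * (∑ i, ∑ j, Ah i * Ah j * g i j)
          + 2 * μ * (∑ i, ∑ j, Ah i * Ah j * (A i * A j))
          - Scal / 2 * (∑ i, ∑ j, Ah i * Ah j * g i j) := by
      simp only [hRic, Finset.mul_sum, ← Finset.sum_add_distrib, ← Finset.sum_sub_distrib]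
      apply Finset.sum_congr rfl; intro i _
      apply Finset.sum_congr rfl; intro j _; ring
    have rhs : ∑ i, ∑ j, Ah i * Ah j * ((κ ^ 2 / FR') * T i j + c * g i j)
        = κ ^ 2 / FR' * ((σ + p) * (∑ i, ∑ j, Ah i * Ah j * (A i * A j))
            + p * (∑ i, ∑ j, Ah i * Ah j * g i j))
          + c * (∑ i, ∑ j, Ah i * Ah j * g i j) := by
      simp only [hT, Finset.mul_sum, ← Finset.sum_add_distrib]
      apply Finset.sum_congr rfl; intro i _
      apply Finset.sum_congr rfl; intro j _; ring
    rw [lhs, rhs, SgA, SAA] at key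
    linarith [key]
  -- contraction of the field equation with ginv (trace)
  have ET : (3 * γ - μ) * 4 + 2 * μ * (-1) - Scal / 2 * 4
      = κ ^ 2 / FR' * ((σ + p) * (-1) + p * 4) + c * 4 := by
    have key : ∑ i, ∑ j, ginv i j * (Ric i j - Scal / 2 * g i j)
        = ∑ i, ∑ j, ginv i j * ((κ ^ 2 / FR') * T i j + c * g i j) := by
      apply Finset.sum_congr rfl; intro i _
      apply Finset.sum_congr rfl; intro j _
      rw [hFE i j]
    have lhs : ∑ i, ∑ j, ginv i j * (Ric i j - Scal / 2 * g i j)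
        = (3 * γ - μ) * (∑ i, ∑ j, ginv i j * g i j)
          + 2 * μ * (∑ i, ∑ j, ginv i j * (A i * A j))
          - Scal / 2 * (∑ i, ∑ j, ginv i j * g i j) := by
      simp only [hRic, Finset.mul_sum, ← Finset.sum_add_distrib, ← Finset.sum_sub_distrib]
      apply Finset.sum_congr rfl; intro i _
      apply Finset.sum_congr rfl; intro j _; ring
    have rhs : ∑ i, ∑ j, ginv i j * ((κ ^ 2 / FR') * T i j + c * g i j)
        = κ ^ 2 / FR' * ((σ + p) * (∑ i, ∑ j, ginv i j * (A i * A j))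
            + p * (∑ i, ∑ j, ginv i j * g i j))
          + c * (∑ i, ∑ j, ginv i j * g i j) := by
      simp only [hT, Finset.mul_sum, ← Finset.sum_add_distrib]
      apply Finset.sum_congr rfl; intro i _
      apply Finset.sum_congr rfl; intro j _; ring
    rw [lhs, rhs, Sg, SgAA] at key
    linarith [key]
  -- now pure algebra
  rw [hc] at EA ET
  subst hScal
  field_simp at EA ET
  rw [show γ * 2 = 2 * γ by ring] at EA ET
  have EA' : 2 * κ ^ 2 * σ = 6 * (μ - γ) * FR' + F (6 * (2 * γ - μ)) := by
    apply mul_right_cancel₀ hF'ne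
    linear_combination (-FR') * EA
  have ET' : 2 * κ ^ 2 * p = (6 * γ - 2 * μ) * FR' - F (6 * (2 * γ - μ)) := by
    apply mul_right_cancel₀ hF'ne
    linear_combination (-FR'/3) * EA + (-FR'/3) * ET
  constructor
  · field_simp
    rw [show γ * 2 = 2 * γ by ring]
    linear_combination ET'
  · field_simp
    rw [show γ * 2 = 2 * γ by ring]
    linear_combination EA'
end
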